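/- arXiv:1502.03839 — 5 statements merged into one kernel-verified Lean document; each statement's English description precedes it below -/
import Mathlib

section
/- Cauchy's rule for generalized polynomials: let p(y) = Σ_{i=1}^n α_i y^{ν_i} with real exponents 0 < ν_1 < ... < ν_n, real coefficients with α_n > 0, and let λ be the number of indices i < n with α_i < 0 (assume λ ≥ 1). Set M = max over i with α_i < 0 of (-λ α_i / α_n)^(1/(ν_n - ν_i)). Then p(y) ≥ 0 for all y ≥ M. -/
/-!
Split the leading term `α_n y^{ν_n}` into `λ` equal parts and pair one part with each negative
term. For `α_i < 0`, the bound `y ≥ (-λ α_i / α_n)^{1/(ν_n - ν_i)}` says exactly that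
`(α_n / λ) y^{ν_n} ≥ -α_i y^{ν_i}`, so each pair is nonnegative; the remaining terms have
nonnegative coefficients.
-/

open Finset Real

lemma mul_rpow_add_mul_rpow_nonneg {a c μ ν y : ℝ} (ha : 0 < a) (hc : c < 0) (hμν : μ < ν)
    (hy : (-c / a) ^ (1 / (ν - μ)) ≤ y) : 0 ≤ a * y ^ ν + c * y ^ μ := by
  have hb : 0 < -c / a := div_pos (neg_pos.mpr hc) ha
  have hd : 0 < ν - μ := sub_pos.mpr hμν
  have hy_pos : 0 < y := (rpow_pos_of_pos hb _).trans_le hy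
  have hb_le : -c / a ≤ y ^ (ν - μ) := by
    rwa [one_div, rpow_inv_le_iff_of_pos hb.le hy_pos.le hd] at hy
  calc 0 = (a * (-c / a) + c) * y ^ μ := by field_simp; ring
    _ ≤ (a * y ^ (ν - μ) + c) * y ^ μ := by gcongr
    _ = a * y ^ ν + c * y ^ μ := by rw [add_mul, mul_assoc, ← rpow_add hy_pos, sub_add_cancel]

lemma Finset.sum_nonneg_of_card_mul_dominated {ι : Type*} [Fintype ι] (f : ι → ℝ) (S : Finset ι)
    (j : ι) (hj : j ∉ S) (hdom : ∀ i ∈ S, 0 ≤ f j + #S * f i) (hrest : ∀ i ∉ S, 0 ≤ f i) :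
    0 ≤ ∑ i, f i := by
  classical
  have hpaired : 0 ≤ f j + ∑ i ∈ S, f i := by
    rcases S.eq_empty_or_nonempty with rfl | hne
    · simpa using hrest j hj
    · refine nonneg_of_mul_nonneg_right ?_ (Nat.cast_pos.mpr hne.card_pos)
      calc 0 ≤ ∑ i ∈ S, (f j + #S * f i) := sum_nonneg hdom
        _ = #S * (f j + ∑ i ∈ S, f i) := by rw [sum_add_distrib, ← mul_sum]; simp [mul_add]
  have hcompl : f j ≤ ∑ i ∈ Sᶜ, f i :=
    single_le_sum (fun i hi => hrest i (mem_compl.mp hi)) (mem_compl.mpr hj)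
  rw [← sum_add_sum_compl S]
  linarith

open Finset in
theorem cauchy_rule_generalized_general (n : ℕ) (ν α : Fin (n + 1) → ℝ)
    (hν : StrictMono ν)
    (hαn : 0 < α (Fin.last n))
    (S : Finset (Fin (n + 1)))
    (hS : S = Finset.univ.filter (fun i => i ≠ Fin.last n ∧ α i < 0))
    (hSne : S.Nonempty)
    (M : ℝ)
    (hM : M = S.sup' hSne
      (fun i => (-(S.card : ℝ) * α i / α (Fin.last n)) ^ ((1 : ℝ) / (ν (Fin.last n) - ν i))))
    (y : ℝ) (hyM : M ≤ y) :
    0 ≤ ∑ i, α i * y ^ (ν i) := by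
  have hmem : ∀ i, i ∈ S ↔ i ≠ Fin.last n ∧ α i < 0 := by simp [hS]
  have hroot : ∀ i ∈ S,
      (-(#S : ℝ) * α i / α (Fin.last n)) ^ ((1 : ℝ) / (ν (Fin.last n) - ν i)) ≤ y :=
    fun i hi => (hM ▸ le_sup' _ hi).trans hyM
  have hy : 0 ≤ y := by
    obtain ⟨i, hi⟩ := hSne
    have hbase : 0 ≤ -(#S : ℝ) * α i / α (Fin.last n) :=
      div_nonneg (by nlinarith [((hmem i).1 hi).2]) hαn.le
    exact (rpow_nonneg hbase _).trans (hroot i hi)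
  refine sum_nonneg_of_card_mul_dominated (fun i => α i * y ^ ν i) S (Fin.last n)
    (by simp [hmem]) (fun i hi => ?_) (fun i hi => ?_)
  · obtain ⟨hne, hneg⟩ := (hmem i).1 hi
    have hcoef : (#S : ℝ) * α i < 0 := mul_neg_of_pos_of_neg (by exact_mod_cast hSne.card_pos) hneg
    have := mul_rpow_add_mul_rpow_nonneg hαn hcoef (hν (Fin.lt_last_iff_ne_last.mpr hne))
      (by simpa only [neg_mul] using hroot i hi)
    simpa only [mul_assoc] using this
  · refine mul_nonneg ?_ (rpow_nonneg hy _)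
    by_cases hL : i = Fin.last n
    · exact hL ▸ hαn.le
    · simpa [hmem, hL] using hi

open Finset in
theorem cauchy_rule_generalized (n : ℕ) (ν α : Fin (n + 1) → ℝ)
    (hν0 : ∀ i, 0 < ν i) (hν : StrictMono ν)
    (hαn : 0 < α (Fin.last n))
    (S : Finset (Fin (n + 1)))
    (hS : S = Finset.univ.filter (fun i => i ≠ Fin.last n ∧ α i < 0))
    (hSne : S.Nonempty)
    (M : ℝ)
    (hM : M = S.sup' hSne
      (fun i => (-(S.card : ℝ) * α i / α (Fin.last n)) ^ ((1 : ℝ) / (ν (Fin.last n) - ν i))))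
    (y : ℝ) (hy : 0 < y) (hyM : M ≤ y) :
    0 ≤ ∑ i, α i * y ^ (ν i) :=
  cauchy_rule_generalized_general n ν α hν hαn S hS hSne M hM y hyM
end

section
/- Let a > 0, x_2 > 3/2, x_1 > 0 and define μ(y) = (a_2/Γ(x_2)) y^{x_2 - 1} - (a_1 x_1/(2√π)) y^{-3/2} exp(-x_1^2/(4y)) for y > 0 with a_1, a_2 > 0. Then μ(y) ≥ 0 for all y > 0 if and only if (x_2 + 1/2)(1 + log(x_1^2/(4x_2 + 2))) ≥ log(a_1 x_1 Γ(x_2)/(2√π a_2)). -/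
/-!
Taking logarithms, `μ y ≥ 0` says `log (B / A) ≤ (x₂ + 1/2) log y + (x₁² / 4) / y`, where
`A = a₂ / Γ(x₂)` and `B = a₁ x₁ / (2√π)`. The function `s log y + b / y` is minimised over
`y > 0` at `y = b / s` with minimum `s (1 + log (b / s))`, which is the right-hand side of the
criterion for `s = x₂ + 1/2` and `b = x₁² / 4`.
-/

open Real

theorem mul_one_add_log_div_le {s b y : ℝ} (hs : 0 < s) (hb : 0 < b) (hy : 0 < y) :
    s * (1 + log (b / s)) ≤ s * log y + b / y := by
  have hlog : log (b / (s * y)) = log (b / s) - log y := by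
    rw [← div_div, log_div (by positivity) hy.ne']
  calc s * (1 + log (b / s)) = s * log y + s * (log (b / (s * y)) + 1) := by rw [hlog]; ring
    _ ≤ s * log y + s * (b / (s * y)) := by
        gcongr
        linarith [log_le_sub_one_of_pos (show 0 < b / (s * y) by positivity)]
    _ = s * log y + b / y := by field_simp

theorem forall_le_mul_log_add_div_iff {s b L : ℝ} (hs : 0 < s) (hb : 0 < b) :
    (∀ y, 0 < y → L ≤ s * log y + b / y) ↔ L ≤ s * (1 + log (b / s)) := by
  refine ⟨fun h => ?_, fun h y hy => h.trans (mul_one_add_log_div_le hs hb hy)⟩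
  have hmin := h (b / s) (by positivity)
  rwa [div_div_cancel₀ hb.ne', add_comm, ← mul_one_add] at hmin

theorem mul_rpow_mul_exp_le_mul_rpow_iff {A B c p q y : ℝ} (hA : 0 < A) (hB : 0 < B)
    (hy : 0 < y) :
    B * y ^ q * exp (-c / y) ≤ A * y ^ p ↔ log (B / A) ≤ (p - q) * log y + c / y := by
  rw [← log_le_log_iff (by positivity) (by positivity), log_mul (by positivity) (exp_ne_zero _),
    log_mul hB.ne' (rpow_pos_of_pos hy q).ne', log_mul hA.ne' (rpow_pos_of_pos hy p).ne',
    log_rpow hy, log_rpow hy, log_exp, log_div hB.ne' hA.ne', neg_div]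
  constructor <;> intro h <;> linarith

theorem mu_nonneg_iff (a₁ a₂ x₁ x₂ : ℝ)
    (ha₁ : 0 < a₁) (ha₂ : 0 < a₂) (hx₂ : 3 / 2 < x₂) (hx₁ : 0 < x₁)
    (μ : ℝ → ℝ)
    (hμ : ∀ y, μ y = a₂ / Real.Gamma x₂ * y ^ (x₂ - 1)
        - a₁ * x₁ / (2 * Real.sqrt Real.pi) * y ^ (-(3 : ℝ) / 2)
          * Real.exp (-x₁ ^ 2 / (4 * y))) :
    (∀ y : ℝ, 0 < y → 0 ≤ μ y) ↔
      Real.log (a₁ * x₁ * Real.Gamma x₂ / (2 * Real.sqrt Real.pi * a₂)) ≤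
        (x₂ + 1 / 2) * (1 + Real.log (x₁ ^ 2 / (4 * x₂ + 2))) := by
  have hΓ : 0 < Gamma x₂ := Gamma_pos_of_pos (by linarith)
  have hπ : 0 < √π := sqrt_pos.mpr pi_pos
  have hratio : a₁ * x₁ * Gamma x₂ / (2 * √π * a₂) = a₁ * x₁ / (2 * √π) / (a₂ / Gamma x₂) := by
    field_simp
  have hs : x₂ - 1 - -(3 : ℝ) / 2 = x₂ + 1 / 2 := by ring
  have hbs : x₁ ^ 2 / 4 / (x₂ + 1 / 2) = x₁ ^ 2 / (4 * x₂ + 2) := by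
    field_simp
    ring
  calc (∀ y : ℝ, 0 < y → 0 ≤ μ y)
      ↔ ∀ y : ℝ, 0 < y → log (a₁ * x₁ * Gamma x₂ / (2 * √π * a₂)) ≤
          (x₂ + 1 / 2) * log y + x₁ ^ 2 / 4 / y := by
        refine forall₂_congr fun y hy => ?_
        rw [hμ, sub_nonneg, show -x₁ ^ 2 / (4 * y) = -(x₁ ^ 2 / 4) / y by ring,
          mul_rpow_mul_exp_le_mul_rpow_iff (by positivity) (by positivity) hy, hratio, hs]
    _ ↔ _ := by
        rw [forall_le_mul_log_add_div_iff (by linarith) (by positivity), hbs]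
end

section
/- For any a > 0, the inverse Laplace transform identity holds: e^{-√(a s)} = ∫_0^∞ e^{-s y} · (√a/(2√π)) y^{-3/2} e^{-a/(4y)} dy for every s > 0. -/
/-!
Substituting `y = x⁻²` turns the integral into `∫₀^∞ exp (-(a/4) x² - s/x²) dx`. Writing the
exponent as `-(b x - c/x)² - 2bc`, this is evaluated by the Cauchy–Schlömilch trick: the map
`x ↦ b x - c/x` is an increasing bijection of `(0, ∞)` onto `ℝ` with derivative `b + c/x²`, so
`∫₀^∞ (b + c/x²) e^{-(b x - c/x)²} dx = √π`, and the involution `x ↦ c/(b x)`, which preserves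
`e^{-(b x - c/x)²}`, shows that the parts with `b` and with `c/x²` contribute equally.
-/

open MeasureTheory Real Set

section Substitution

variable {E : Type*} [NormedAddCommGroup E] [NormedSpace ℝ E] {b c : ℝ}

lemma hasDerivAt_mul_sub_div (b c : ℝ) {x : ℝ} (hx : x ≠ 0) :
    HasDerivAt (fun x => b * x - c / x) (b + c / x ^ 2) x := by
  have h := ((hasDerivAt_id' x).const_mul b).sub ((hasDerivAt_inv hx).const_mul c)
  simp only [mul_one, mul_neg, sub_neg_eq_add, ← div_eq_mul_inv] at h
  exact h

lemma strictMonoOn_mul_sub_div (hb : 0 < b) (hc : 0 ≤ c) :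
    StrictMonoOn (fun x => b * x - c / x) (Ioi 0) := by
  intro x hx y _ hxy
  have : c / y ≤ c / x := div_le_div_of_nonneg_left hc hx hxy.le
  have : b * x < b * y := mul_lt_mul_of_pos_left hxy hb
  dsimp only
  linarith

lemma image_mul_sub_div_Ioi (hb : 0 < b) (hc : 0 < c) :
    (fun x => b * x - c / x) '' Ioi 0 = univ := by
  refine eq_univ_of_forall fun u => ?_
  -- `x` is the positive root of `b x ^ 2 - u x - c`.
  set d := √(u ^ 2 + 4 * b * c)
  have hd : d ^ 2 = u ^ 2 + 4 * b * c := sq_sqrt (by positivity)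
  have hud : |u| < d := by
    rw [← sqrt_sq_eq_abs]
    exact sqrt_lt_sqrt (sq_nonneg u) (by nlinarith)
  have hud' : 0 < u + d := by linarith [neg_abs_le u]
  refine ⟨(u + d) / (2 * b), div_pos hud' (by positivity), ?_⟩
  field_simp
  nlinarith

theorem integral_Ioi_smul_comp_mul_sub_div (hb : 0 < b) (hc : 0 < c) (g : ℝ → E) :
    ∫ x in Ioi 0, (b + c / x ^ 2) • g (b * x - c / x) = ∫ u, g u := by
  have := integral_image_eq_integral_abs_deriv_smul measurableSet_Ioi
    (fun x hx => (hasDerivAt_mul_sub_div b c (ne_of_gt hx)).hasDerivWithinAt)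
    (strictMonoOn_mul_sub_div hb hc.le).injOn g
  rw [image_mul_sub_div_Ioi hb hc, Measure.restrict_univ] at this
  rw [this]
  refine setIntegral_congr_fun measurableSet_Ioi fun x hx => ?_
  rw [abs_of_pos (by have : 0 < x := hx; positivity)]

theorem integrableOn_Ioi_smul_comp_mul_sub_div_iff (hb : 0 < b) (hc : 0 < c) (g : ℝ → E) :
    IntegrableOn (fun x => (b + c / x ^ 2) • g (b * x - c / x)) (Ioi 0) ↔ Integrable g := by
  have := integrableOn_image_iff_integrableOn_abs_deriv_smul measurableSet_Ioi
    (fun x hx => (hasDerivAt_mul_sub_div b c (ne_of_gt hx)).hasDerivWithinAt)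
    (strictMonoOn_mul_sub_div hb hc.le).injOn g
  rw [image_mul_sub_div_Ioi hb hc, integrableOn_univ] at this
  rw [this]
  refine integrableOn_congr_fun (fun x hx => ?_) measurableSet_Ioi
  rw [abs_of_pos (by have : 0 < x := hx; positivity)]

theorem integral_Ioi_div_sq_smul_comp_div {k : ℝ} (hk : 0 < k) (g : ℝ → E) :
    ∫ x in Ioi 0, (k / x ^ 2) • g (k / x) = ∫ x in Ioi 0, g x := by
  have hderiv : ∀ x ∈ Ioi (0 : ℝ), HasDerivWithinAt (fun x => k / x) (-(k / x ^ 2)) (Ioi 0) x :=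
    fun x hx => by
      simpa [div_eq_mul_inv] using ((hasDerivAt_inv (ne_of_gt hx)).const_mul k).hasDerivWithinAt
  have hinj : InjOn (fun x => k / x) (Ioi 0) := fun x _ y _ h =>
    inv_injective (mul_left_cancel₀ hk.ne' h)
  have himage : (fun x => k / x) '' Ioi 0 = Ioi 0 := by
    refine Subset.antisymm (image_subset_iff.2 fun x hx => div_pos hk hx) fun y hy => ?_
    exact ⟨k / y, div_pos hk hy, div_div_cancel₀ hk.ne'⟩
  have := integral_image_eq_integral_abs_deriv_smul measurableSet_Ioi hderiv hinj g
  rw [himage] at this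
  rw [this]
  refine setIntegral_congr_fun measurableSet_Ioi fun x hx => ?_
  rw [abs_neg, abs_of_pos (by have : 0 < x := hx; positivity)]

theorem integral_Ioi_div_pow_three_smul_comp_inv_sq (g : ℝ → E) :
    ∫ x in Ioi 0, (2 / x ^ 3) • g (x ^ 2)⁻¹ = ∫ y in Ioi 0, g y := by
  rw [← integral_comp_rpow_Ioi g (by norm_num : (-2 : ℝ) ≠ 0)]
  refine setIntegral_congr_fun measurableSet_Ioi fun x hx => ?_
  have hx : 0 ≤ x := le_of_lt hx
  rw [show (-2 : ℝ) - 1 = -(3 : ℕ) by norm_num, rpow_neg hx, rpow_neg hx, rpow_natCast, rpow_two]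
  norm_num [div_eq_mul_inv]

end Substitution

theorem integral_Ioi_exp_neg_sq_mul_sub_div {b c : ℝ} (hb : 0 < b) (hc : 0 < c) :
    ∫ x in Ioi 0, exp (-(b * x - c / x) ^ 2) = √π / (2 * b) := by
  set F : ℝ → ℝ := fun x => exp (-(b * x - c / x) ^ 2)
  have hgauss : Integrable fun u : ℝ => exp (-u ^ 2) := by
    simpa using integrable_exp_neg_mul_sq one_pos
  have hsum_int : IntegrableOn (fun x => (b + c / x ^ 2) * F x) (Ioi 0) :=
    (integrableOn_Ioi_smul_comp_mul_sub_div_iff hb hc _).2 hgauss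
  have hsum : ∫ x in Ioi 0, (b + c / x ^ 2) * F x = √π := by
    have := integral_Ioi_smul_comp_mul_sub_div hb hc fun u => exp (-u ^ 2)
    simp only [smul_eq_mul] at this
    rw [this]
    simpa using integral_gaussian 1
  have hb_int : IntegrableOn (fun x => b * F x) (Ioi 0) := by
    refine hsum_int.mono' (by fun_prop) ((ae_restrict_iff' measurableSet_Ioi).2 ?_)
    filter_upwards with x hx
    rw [norm_of_nonneg (by positivity)]
    have : 0 ≤ c / x ^ 2 * F x := by positivity
    nlinarith
  have hc_int : IntegrableOn (fun x => c / x ^ 2 * F x) (Ioi 0) :=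
    (hsum_int.sub hb_int).congr_fun (fun x _ => by simp only [Pi.sub_apply]; ring)
      measurableSet_Ioi
  have hreflect : ∫ x in Ioi 0, c / x ^ 2 * F x = ∫ x in Ioi 0, b * F x := by
    rw [integral_const_mul, ← integral_Ioi_div_sq_smul_comp_div (div_pos hc hb) F,
      ← integral_const_mul]
    refine setIntegral_congr_fun measurableSet_Ioi fun x hx => ?_
    have : 0 < x := hx
    have hF : F (c / b / x) = F x := by
      simp only [F]
      congr 2
      field_simp
      ring
    rw [smul_eq_mul, hF]
    field_simp
  have : 2 * (b * ∫ x in Ioi 0, F x) = √π := by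
    rw [← hsum, ← integral_const_mul]
    rw [show (fun x => (b + c / x ^ 2) * F x) = fun x => b * F x + c / x ^ 2 * F x by
      funext x; ring, integral_add hb_int hc_int, hreflect]
    ring
  field_simp
  linarith

theorem integral_Ioi_exp_neg_mul_sq_sub_div_sq {p q : ℝ} (hp : 0 < p) (hq : 0 < q) :
    ∫ x in Ioi 0, exp (-(p * x ^ 2) - q / x ^ 2) = √π / (2 * √p) * exp (-(2 * √(p * q))) := by
  have hsq : ∀ x ∈ Ioi (0 : ℝ), exp (-(p * x ^ 2) - q / x ^ 2)
      = exp (-(√p * x - √q / x) ^ 2) * exp (-(2 * √(p * q))) := by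
    intro x hx
    have : x ≠ 0 := ne_of_gt hx
    rw [← exp_add, sqrt_mul hp.le]
    congr 1
    field_simp
    linear_combination x ^ 4 * sq_sqrt hp.le + sq_sqrt hq.le
  rw [setIntegral_congr_fun measurableSet_Ioi hsq, integral_mul_const,
    integral_Ioi_exp_neg_sq_mul_sub_div (sqrt_pos.2 hp) (sqrt_pos.2 hq)]

lemma inv_sq_rpow_neg_three_halves {x : ℝ} (hx : 0 ≤ x) :
    ((x ^ 2)⁻¹) ^ (-(3 : ℝ) / 2) = x ^ 3 := by
  rw [inv_rpow (by positivity), ← rpow_natCast, ← rpow_mul hx, ← rpow_neg (by positivity)]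
  norm_num

open MeasureTheory in
theorem inverse_laplace_exp_sqrt (a s : ℝ) (ha : 0 < a) (hs : 0 < s) :
    ∫ y in Set.Ioi (0 : ℝ),
        Real.exp (-s * y) * (Real.sqrt a / (2 * Real.sqrt Real.pi)
          * y ^ (-(3 : ℝ) / 2) * Real.exp (-a / (4 * y))) =
      Real.exp (-Real.sqrt (a * s)) := by
  rw [← integral_Ioi_div_pow_three_smul_comp_inv_sq]
  have hintegrand : ∀ x ∈ Ioi (0 : ℝ), (2 / x ^ 3) • (exp (-s * (x ^ 2)⁻¹) *
      (√a / (2 * √π) * ((x ^ 2)⁻¹) ^ (-(3 : ℝ) / 2) * exp (-a / (4 * (x ^ 2)⁻¹))))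
        = √a / √π * exp (-(a / 4 * x ^ 2) - s / x ^ 2) := by
    intro x hx
    have : x ≠ 0 := ne_of_gt hx
    rw [inv_sq_rpow_neg_three_halves (le_of_lt hx), smul_eq_mul, mul_comm (exp _),
      mul_assoc _ (exp _), ← exp_add]
    field_simp
    ring_nf
  rw [setIntegral_congr_fun measurableSet_Ioi hintegrand, integral_const_mul,
    integral_Ioi_exp_neg_mul_sq_sub_div_sq (by positivity) hs]
  have hquarter : ∀ t : ℝ, √(t / 4) = √t / 2 := fun t => by
    rw [sqrt_div' _ (by norm_num), show (4 : ℝ) = 2 ^ 2 by norm_num, sqrt_sq zero_le_two]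
  rw [show a / 4 * s = a * s / 4 by ring, hquarter, hquarter, mul_div_cancel₀ _ two_ne_zero]
  have : 0 < √a := sqrt_pos.2 ha
  have : 0 < √π := sqrt_pos.2 pi_pos
  field_simp
end

section
/- Let p(y) = (α_2/A^{x_2 - x_1}) y^{2x_2 - 1} - α_1 y^{x_2 + x_1 - 1} - α_1 y^{x_2 - x_1} + α_2/A^{x_2 - x_1}, where 1 < x_1 < x_2, α_1, α_2 > 0, A > 0, and assume α_2/A^{x_2 - x_1} ≥ α_1. Then p(y) ≥ 0 for all y ≥ 1. -/
theorem LJ_key_positivity (x₁ x₂ α₁ α₂ A : ℝ)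
    (hx₁ : 1 < x₁) (hx : x₁ < x₂) (hα₁ : 0 < α₁) (hα₂ : 0 < α₂) (hA : 0 < A)
    (hbound : α₁ ≤ α₂ / A ^ (x₂ - x₁))
    (y : ℝ) (hy : 1 ≤ y) :
    0 ≤ α₂ / A ^ (x₂ - x₁) * y ^ (2 * x₂ - 1) - α₁ * y ^ (x₂ + x₁ - 1)
        - α₁ * y ^ (x₂ - x₁) + α₂ / A ^ (x₂ - x₁) := by
  set B := α₂ / A ^ (x₂ - x₁) with hB
  have hy0 : (0:ℝ) < y := lt_of_lt_of_le one_pos hy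
  have hb : (0:ℝ) ≤ x₂ + x₁ - 1 := by linarith
  have hc : (0:ℝ) ≤ x₂ - x₁ := by linarith
  have h1 : (1:ℝ) ≤ y ^ (x₂ + x₁ - 1) := Real.one_le_rpow hy hb
  have h2 : (1:ℝ) ≤ y ^ (x₂ - x₁) := Real.one_le_rpow hy hc
  have hadd : y ^ (2 * x₂ - 1) = y ^ (x₂ + x₁ - 1) * y ^ (x₂ - x₁) := by
    rw [← Real.rpow_add hy0]; ring_nf
  have hB1 : α₁ ≤ B := hbound
  have key : y ^ (x₂ + x₁ - 1) + y ^ (x₂ - x₁) ≤ y ^ (2 * x₂ - 1) + 1 := by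
    rw [hadd]; nlinarith
  nlinarith [mul_le_mul_of_nonneg_left key (le_of_lt hα₁),
    mul_le_mul_of_nonneg_right hB1 (by nlinarith : (0:ℝ) ≤ y ^ (2 * x₂ - 1) + 1)]
end

section
/- Let n ≥ 1, a_1,...,a_n ∈ ℝ* with Σ a_i ≥ 0, and 0 < x_1 < ... < x_n. Define μ(y) = Σ_{i=1}^n a_i 1_{[x_i,∞)}(y), and for A with 0 < A ≤ π/x_n define g_A(y) = y^{-1} μ(π/(yA)) + μ(πy/A) for y ≥ 1. If additionally A ≤ min over k with Σ_{i=1}^k a_i < 0 of (π/x_{k+1})·(−(Σ_{i=1}^n a_i)/(Σ_{i=1}^k a_i)), then g_A(y) ≥ 0 for all y ≥ 1. -/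
open Finset in
theorem screened_coulomb_gA_nonneg (n : ℕ) (hn : 1 ≤ n) (a x : ℕ → ℝ)
    (ha0 : ∀ i ∈ Finset.Icc 1 n, a i ≠ 0)
    (hsum : 0 ≤ ∑ i ∈ Finset.Icc 1 n, a i)
    (hxpos : ∀ i ∈ Finset.Icc 1 n, 0 < x i)
    (hxmono : ∀ i ∈ Finset.Icc 1 n, ∀ j ∈ Finset.Icc 1 n, i < j → x i < x j)
    (μ : ℝ → ℝ)
    (hμ : ∀ y, μ y = ∑ i ∈ Finset.Icc 1 n, if x i ≤ y then a i else 0)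
    (A : ℝ) (hA : 0 < A) (hAn : A ≤ Real.pi / x n)
    (hAk : ∀ k, 1 ≤ k → k < n → (∑ i ∈ Finset.Icc 1 k, a i) < 0 →
      A ≤ Real.pi / x (k + 1) *
        (-(∑ i ∈ Finset.Icc 1 n, a i) / (∑ i ∈ Finset.Icc 1 k, a i))) :
    ∀ y : ℝ, 1 ≤ y → 0 ≤ y⁻¹ * μ (Real.pi / (y * A)) + μ (Real.pi * y / A) := by
  classical
  intro y hy
  have hy0 : (0:ℝ) < y := lt_of_lt_of_le one_pos hy
  have hπ : (0:ℝ) < Real.pi := Real.pi_pos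
  have hnmem : n ∈ Finset.Icc 1 n := by simp [hn]
  have hxn : 0 < x n := hxpos n hnmem
  -- the large argument picks up the full sum
  have h1 : μ (Real.pi * y / A) = ∑ i ∈ Finset.Icc 1 n, a i := by
    rw [hμ]
    apply Finset.sum_congr rfl
    intro i hi
    rw [if_pos]
    have hxi : x i ≤ x n := by
      rcases eq_or_lt_of_le (Finset.mem_Icc.mp hi).2 with h | h
      · rw [h]
      · exact (hxmono i hi n hnmem h).le
    have hAxn : A * x n ≤ Real.pi := (le_div_iff₀ hxn).mp hAn
    have hxnA : x n ≤ Real.pi / A := (le_div_iff₀ hA).mpr (by nlinarith)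
    have h2 : Real.pi / A ≤ Real.pi * y / A := by
      apply div_le_div_of_nonneg_right (by nlinarith) hA.le
    linarith
  -- the small argument
  set t : ℝ := Real.pi / (y * A) with ht
  have ht0 : 0 < t := by positivity
  set K : Finset ℕ := (Finset.Icc 1 n).filter (fun i => x i ≤ t) with hK
  have hμt : μ t = ∑ i ∈ K, a i := by
    rw [hμ, hK, Finset.sum_filter]
  rcases Finset.eq_empty_or_nonempty K with hKe | hKne
  · rw [h1, hμt, hKe]
    simp
    linarith
  · set k : ℕ := K.max' hKne with hk
    have hkK : k ∈ K := K.max'_mem hKne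
    have hkIcc : k ∈ Finset.Icc 1 n := Finset.mem_of_mem_filter _ hkK
    have hk1 : 1 ≤ k := (Finset.mem_Icc.mp hkIcc).1
    have hkn : k ≤ n := (Finset.mem_Icc.mp hkIcc).2
    have hxkt : x k ≤ t := (Finset.mem_filter.mp hkK).2
    have hKeq : K = Finset.Icc 1 k := by
      ext i
      simp only [hK, Finset.mem_filter, Finset.mem_Icc]
      constructor
      · rintro ⟨⟨h1i, h2i⟩, h3i⟩
        exact ⟨h1i, K.le_max' i (by simp [hK, Finset.mem_filter, Finset.mem_Icc, h1i, h2i, h3i])⟩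
      · rintro ⟨h1i, h2i⟩
        have hiIcc : i ∈ Finset.Icc 1 n := Finset.mem_Icc.mpr ⟨h1i, le_trans h2i hkn⟩
        refine ⟨⟨h1i, le_trans h2i hkn⟩, ?_⟩
        rcases eq_or_lt_of_le h2i with h | h
        · rw [h]; exact hxkt
        · exact le_trans (hxmono i hiIcc k hkIcc h).le hxkt
    have hμt' : μ t = ∑ i ∈ Finset.Icc 1 k, a i := by rw [hμt, hKeq]
    rcases le_or_gt 0 (∑ i ∈ Finset.Icc 1 k, a i) with hSk | hSk
    · rw [h1, hμt']
      have : 0 ≤ y⁻¹ * ∑ i ∈ Finset.Icc 1 k, a i :=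
        mul_nonneg (inv_nonneg.mpr hy0.le) hSk
      linarith
    · -- negative partial sum case
      have hkltn : k < n := by
        rcases lt_or_eq_of_le hkn with h | h
        · exact h
        · exfalso; rw [h] at hSk; linarith
      have h2 := hAk k hk1 hkltn hSk
      have hk1mem : k + 1 ∈ Finset.Icc 1 n := Finset.mem_Icc.mpr ⟨by omega, by omega⟩
      have hb : 0 < x (k + 1) := hxpos _ hk1mem
      have hk1K : k + 1 ∉ K := by
        intro hmem
        have := K.le_max' (k + 1) hmem
        omega
      have htlt : t < x (k + 1) := by
        by_contra hcon
        exact hk1K (by simp [hK, Finset.mem_filter, hk1mem, not_lt.mp hcon])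
      have h4 : Real.pi < x (k + 1) * (y * A) := (div_lt_iff₀ (by positivity)).mp htlt
      set sk := ∑ i ∈ Finset.Icc 1 k, a i
      set sn := ∑ i ∈ Finset.Icc 1 n, a i
      have hsk' : (0:ℝ) < -sk := by linarith
      have hskne : sk ≠ 0 := by linarith
      have hbne : x (k + 1) ≠ 0 := ne_of_gt hb
      have h2' : A ≤ Real.pi * sn / (x (k + 1) * (-sk)) := by
        have heq : Real.pi / x (k + 1) * (-sn / sk) = Real.pi * sn / (x (k + 1) * (-sk)) := by
          field_simp
        linarith [heq ▸ h2]
      have h3 : A * (x (k + 1) * (-sk)) ≤ Real.pi * sn := (le_div_iff₀ (by positivity)).mp h2'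
      have h5 : 0 < sk + y * sn := by nlinarith
      rw [h1, hμt']
      have heq2 : y⁻¹ * sk + sn = y⁻¹ * (sk + y * sn) := by
        field_simp
      rw [heq2]
      positivity
end
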